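/- Fix λ ∈ ℝ, t > 0, r ∈ ℕ, and k ∈ ℕ with k > 1 and 2k ≤ 2^r. Let X = {x ∈ {0, …, 2^r − 1} : |x − λt/(2π) mod 2^r| ≤ k} (distance taken cyclically). Then the total probability ∑_{x ∈ X} |κ_x|² ≥ 1 − 1/(2(k−1)), where κ_x = 2^{−r} ∑_{z=0}^{2^r−1} e^{i(2πx − λt)z/2^r}. -/

import Mathlib

set_option maxHeartbeats 1000000

open Finset

section PhaseEstimationAux

open Real Complex

lemma sum_inv_sq_le' (k M : ℕ) (hk : 2 ≤ k) :
    ∑ i ∈ Finset.Icc k M, (1:ℝ)/(i:ℝ)^2 ≤ 1/((k:ℝ)-1) := by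
  have hk1 : (1:ℝ) ≤ (k:ℝ) - 1 := by
    have : (2:ℝ) ≤ k := by exact_mod_cast hk
    linarith
  calc ∑ i ∈ Finset.Icc k M, (1:ℝ)/(i:ℝ)^2
      ≤ ∑ i ∈ Finset.Icc k M, ((1:ℝ)/((i:ℝ)-1) - 1/(i:ℝ)) := by
        apply Finset.sum_le_sum
        intro i hi
        have hik : k ≤ i := (Finset.mem_Icc.mp hi).1
        have h2i : (2:ℝ) ≤ (i:ℝ) := by
          have : 2 ≤ i := le_trans hk hik
          exact_mod_cast this
        have h1 : (0:ℝ) < (i:ℝ) - 1 := by linarith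
        have h0 : (0:ℝ) < (i:ℝ) := by linarith
        rw [div_sub_div _ _ (ne_of_gt h1) (ne_of_gt h0), div_le_div_iff₀ (by positivity) (by positivity)]
        nlinarith
    _ ≤ 1/((k:ℝ)-1) := by
        rw [← Finset.Ico_add_one_right_eq_Icc, Finset.sum_Ico_eq_sum_range]
        have : ∀ j ∈ Finset.range (M + 1 - k),
            (1:ℝ)/((↑(k + j):ℝ)-1) - 1/(↑(k+j):ℝ)
            = (fun j : ℕ => 1/((k:ℝ) + (j:ℝ) - 1)) j - (fun j : ℕ => 1/((k:ℝ) + (j:ℝ) - 1)) (j+1) := by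
          intro j _
          push_cast
          ring_nf
        rw [Finset.sum_congr rfl this, Finset.sum_range_sub']
        have hm : (0:ℝ) ≤ ((M + 1 - k : ℕ):ℝ) := Nat.cast_nonneg _
        have h0 : (0:ℝ) ≤ 1 / ((k:ℝ) + ((M + 1 - k : ℕ):ℝ) - 1) := by
          apply div_nonneg zero_le_one
          linarith
        norm_num
        linarith


lemma tail_sum (k N : ℕ) (hk : 2 ≤ k) (S : Finset ℕ) (e : ℕ → ℝ) (ι : ℕ → ℕ)
    (hinj : ∀ x ∈ S, ∀ y ∈ S, ι x = ι y → x = y)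
    (h1 : ∀ x ∈ S, k ≤ ι x ∧ ι x ≤ N ∧ (ι x : ℝ) ≤ |e x|) :
    ∑ x ∈ S, 1/(4 * (e x)^2) ≤ 1/(4 * ((k:ℝ)-1)) := by
  have hk1 : (1:ℝ) ≤ (k:ℝ) - 1 := by
    have : (2:ℝ) ≤ k := by exact_mod_cast hk
    linarith
  calc ∑ x ∈ S, 1/(4 * (e x)^2)
      ≤ ∑ x ∈ S, (fun i : ℕ => 1/(4 * (i:ℝ)^2)) (ι x) := by
        apply Finset.sum_le_sum
        intro x hx
        obtain ⟨hka, _, hle⟩ := h1 x hx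
        have hι : (2:ℝ) ≤ (ι x : ℝ) := by
          have : 2 ≤ ι x := le_trans hk hka
          exact_mod_cast this
        have hsq : ((ι x:ℝ))^2 ≤ (e x)^2 := by
          have h0 : (0:ℝ) ≤ (ι x:ℝ) := by linarith
          nlinarith [_root_.sq_abs (e x), abs_nonneg (e x)]
        apply one_div_le_one_div_of_le (by positivity)
        linarith
    _ = ∑ i ∈ S.image ι, 1/(4 * (i:ℝ)^2) :=
        (Finset.sum_image (f := fun i : ℕ => 1/(4 * (i:ℝ)^2)) (g := ι) hinj).symm
    _ ≤ ∑ i ∈ Finset.Icc k N, 1/(4 * (i:ℝ)^2) := by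
        apply Finset.sum_le_sum_of_subset_of_nonneg
        · intro i hi
          obtain ⟨x, hx, rfl⟩ := Finset.mem_image.mp hi
          obtain ⟨h1', h2', _⟩ := h1 x hx
          exact Finset.mem_Icc.mpr ⟨h1', h2'⟩
        · intro i _ _
          positivity
    _ ≤ 1/(4 * ((k:ℝ)-1)) := by
        have : ∀ i ∈ Finset.Icc k N, 1/(4 * (i:ℝ)^2) = (1/4) * (1/(i:ℝ)^2) := by
          intro i _
          ring
        rw [Finset.sum_congr rfl this, ← Finset.mul_sum]
        have h2 := sum_inv_sq_le' k N hk
        have h4 : (1:ℝ)/4 * (1/((k:ℝ)-1)) = 1/(4 * ((k:ℝ)-1)) := by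
          rw [div_mul_div_comm, one_mul]
        rw [← h4]
        nlinarith

lemma exp_sum_zero (N : ℕ) (hN : 0 < N) (m : ℤ) (hm : m ≠ 0) (hmN : m.natAbs < N) :
    ∑ x ∈ Finset.range N, Complex.exp (2 * (Real.pi:ℂ) * Complex.I * m * x / N) = 0 := by
  set w : ℂ := Complex.exp (2 * (Real.pi:ℂ) * Complex.I * m / N) with hw
  have hNne : (N:ℂ) ≠ 0 := by exact_mod_cast Nat.cast_ne_zero.mpr hN.ne'
  have hterm : ∀ x : ℕ, Complex.exp (2 * (Real.pi:ℂ) * Complex.I * m * x / N) = w ^ x := by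
    intro x
    rw [hw, ← Complex.exp_nat_mul]
    ring_nf
  have hw1 : w ≠ 1 := by
    intro h
    rw [hw, Complex.exp_eq_one_iff] at h
    obtain ⟨n, hn⟩ := h
    have hpi : (2 * (Real.pi:ℂ) * Complex.I) ≠ 0 := by
      simp [Complex.ofReal_ne_zero, Real.pi_ne_zero, Complex.I_ne_zero]
    have hmc : (m:ℂ) = n * N := by
      have h2 : 2 * (Real.pi:ℂ) * Complex.I * m = 2 * (Real.pi:ℂ) * Complex.I * (n * N) := by
        field_simp at hn
        linear_combination (2 * (Real.pi:ℂ) * Complex.I) * hn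
      exact mul_left_cancel₀ hpi h2
    have hmz : m = n * N := by exact_mod_cast hmc
    have hn0 : n ≠ 0 := by
      rintro rfl
      simp at hmz
      exact hm hmz
    have : N ≤ m.natAbs := by
      rw [hmz, Int.natAbs_mul]
      simpa using Nat.le_mul_of_pos_left N (Int.natAbs_pos.mpr hn0)
    omega
  have hwN : w ^ N = 1 := by
    rw [hw, ← Complex.exp_nat_mul]
    have : (N:ℂ) * (2 * (Real.pi:ℂ) * Complex.I * m / N) = (m : ℤ) * (2 * Real.pi * Complex.I) := by
      field_simp
    rw [this, Complex.exp_int_mul_two_pi_mul_I]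
  rw [Finset.sum_congr rfl (fun x _ => hterm x), geom_sum_eq hw1, hwN]
  simp

lemma kappa_bound (N : ℕ) (hN : 0 < N) (lam t : ℝ) (x : ℕ) (d : ℝ) (n : ℤ)
    (hx : (x:ℝ) - lam * t / (2*Real.pi) = d + n * N)
    (hd0 : 0 < |d|) (hdN : |d| ≤ (N:ℝ) / 2) :
    (‖(N:ℂ)⁻¹ * ∑ z ∈ Finset.range N, Complex.exp (Complex.I * (((2 * Real.pi * x - lam * t) * z) / N))‖)^2
      ≤ 1 / (4 * d^2) := by
  have hNR : (0:ℝ) < N := by exact_mod_cast hN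
  have hNne : (N:ℂ) ≠ 0 := Nat.cast_ne_zero.mpr hN.ne'
  have hπ : (0:ℝ) < Real.pi := Real.pi_pos
  set a : ℝ := 2 * Real.pi * d / N with ha
  set w : ℂ := Complex.exp ((a:ℂ) * Complex.I) with hw
  -- the real identity
  have hlt : lam * t = 2*Real.pi*(x:ℝ) - 2*Real.pi*d - 2*Real.pi*n*N := by
    have h2π : (2*Real.pi) ≠ 0 := by positivity
    field_simp at hx
    linarith
  -- each term is w ^ z
  have hterm : ∀ z ∈ Finset.range N, Complex.exp (Complex.I * (((2 * Real.pi * x - lam * t) * z) / N)) = w ^ z := by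
    intro z _
    rw [hw, ← Complex.exp_nat_mul]
    have harg : Complex.I * ((2 * (Real.pi:ℂ) * x - lam * t) * z / N)
        = (z:ℂ) * ((a:ℂ) * Complex.I) + ((n * z : ℤ):ℂ) * (2 * (Real.pi:ℂ) * Complex.I) := by
      have hc : ((lam * t : ℝ):ℂ) = 2*(Real.pi:ℂ)*(x:ℂ) - 2*(Real.pi:ℂ)*(d:ℂ) - 2*(Real.pi:ℂ)*(n:ℂ)*(N:ℂ) := by
        push_cast
        exact_mod_cast congrArg (fun y : ℝ => (y:ℂ)) hlt
      push_cast
      push_cast at hc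
      rw [ha]
      push_cast
      field_simp
      linear_combination (-(z:ℂ)) * hc
    rw [harg, Complex.exp_add, Complex.exp_int_mul_two_pi_mul_I, mul_one]
  rw [Finset.sum_congr rfl hterm]
  -- w ≠ 1
  have hd0' : d ≠ 0 := by
    intro h; rw [h] at hd0; simp at hd0
  have hw1 : w ≠ 1 := by
    intro h
    rw [hw, Complex.exp_eq_one_iff] at h
    obtain ⟨m, hm⟩ := h
    have hm' : (a:ℂ) * Complex.I = (((m:ℝ) * (2*Real.pi) : ℝ) : ℂ) * Complex.I := by
      push_cast
      linear_combination hm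
    have haR : a = (m:ℝ) * (2*Real.pi) := by
      have := mul_right_cancel₀ Complex.I_ne_zero hm'
      exact_mod_cast this
    have h2 : 2*Real.pi*d = 2*Real.pi*((m:ℝ)*N) := by
      rw [ha] at haR
      field_simp at haR
      linear_combination (2*Real.pi) * haR
    have hdm : d = (m:ℝ) * N := mul_left_cancel₀ (by positivity) h2
    rcases eq_or_ne m 0 with h0 | h0
    · rw [h0] at hdm; simp at hdm; exact hd0' hdm
    · have h1 : (1:ℝ) ≤ |(m:ℝ)| := by
        have : (1:ℤ) ≤ |m| := Int.one_le_abs (by omega)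
        exact_mod_cast this
      have : (N:ℝ) ≤ |d| := by
        rw [hdm, abs_mul, abs_of_pos hNR]
        nlinarith [abs_nonneg (m:ℝ)]
      linarith
  -- geometric sum bound
  have hwN : ‖w ^ N - 1‖ ≤ 2 := by
    calc ‖w ^ N - 1‖ ≤ ‖w ^ N‖ + ‖(1:ℂ)‖ := by
          exact norm_sub_le _ _
      _ ≤ 2 := by
          rw [norm_pow, hw]
          rw [Complex.norm_exp_ofReal_mul_I]
          norm_num
  set B : ℝ := ‖w - 1‖ with hB
  have hB0 : 0 < B := by
    rw [hB]
    simp only [norm_pos_iff, sub_ne_zero]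
    exact hw1
  have habs : ‖∑ z ∈ Finset.range N, w ^ z‖ ≤ 2 / B := by
    rw [geom_sum_eq hw1, norm_div]
    gcongr
  -- |w - 1|^2 = 4 sin(a/2)^2
  have hBsq : B^2 = 4 * Real.sin (a/2)^2 := by
    rw [hB, Complex.sq_norm, Complex.normSq_apply]
    have hre : (w - 1).re = Real.cos a - 1 := by
      rw [hw]
      simp [Complex.exp_ofReal_mul_I_re]
    have him : (w - 1).im = Real.sin a := by
      rw [hw]
      simp [Complex.exp_ofReal_mul_I_im]
    rw [hre, him]
    have hcos : Real.cos a = 1 - 2 * Real.sin (a/2)^2 := by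
      have := Real.cos_two_mul (a/2)
      have hsc := Real.sin_sq_add_cos_sq (a/2)
      have : Real.cos (2 * (a/2)) = 2 * Real.cos (a/2)^2 - 1 := this
      rw [show 2 * (a/2) = a by ring] at this
      nlinarith
    have hsin2 : Real.sin a = 2 * Real.sin (a/2) * Real.cos (a/2) := by
      have := Real.sin_two_mul (a/2)
      rw [show 2 * (a/2) = a by ring] at this
      linarith
    rw [hcos, hsin2]
    have hsc := Real.sin_sq_add_cos_sq (a/2)
    linear_combination (4 * Real.sin (a/2)^2) * hsc
  -- sin lower bound
  have hsin : (2 * |d| / N)^2 ≤ Real.sin (a/2)^2 := by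
    have hval : |a/2| = Real.pi * |d| / N := by
      rw [show a/2 = Real.pi * d / N by rw [ha]; ring]
      rw [abs_div, abs_mul, abs_of_pos hπ, abs_of_pos hNR]
    have h1 : |a/2| ≤ Real.pi/2 := by
      rw [hval, div_le_div_iff₀ (by positivity) (by norm_num)]
      nlinarith
    have h2 : Real.sin |a/2| ≥ 2/Real.pi * |a/2| :=
      Real.mul_le_sin (abs_nonneg _) h1
    have h3 : 2/Real.pi * |a/2| = 2 * |d| / N := by
      rw [hval]
      field_simp
    have h4 : Real.sin (a/2)^2 = Real.sin |a/2|^2 := by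
      rcases abs_cases (a/2) with ⟨h,_⟩ | ⟨h,_⟩
      · rw [h]
      · rw [h, Real.sin_neg]
        ring
    rw [h4]
    have h5 : 0 ≤ 2 * |d| / N := by positivity
    nlinarith
  -- combine
  have hA : ‖(N:ℂ)⁻¹ * ∑ z ∈ Finset.range N, w ^ z‖ ≤ (N:ℝ)⁻¹ * (2/B) := by
    rw [norm_mul]
    have : ‖(N:ℂ)⁻¹‖ = (N:ℝ)⁻¹ := by
      rw [norm_inv, Complex.norm_natCast]
    rw [this]
    apply mul_le_mul_of_nonneg_left habs (by positivity)
  have hAnn : 0 ≤ ‖(N:ℂ)⁻¹ * ∑ z ∈ Finset.range N, w ^ z‖ := by positivity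
  have hd2 : 0 < d^2 := by positivity
  have hsin0 : 0 < Real.sin (a/2)^2 := by
    have : (0:ℝ) < (2 * |d| / N)^2 := by positivity
    linarith
  calc (‖(N:ℂ)⁻¹ * ∑ z ∈ Finset.range N, w ^ z‖)^2
      ≤ ((N:ℝ)⁻¹ * (2/B))^2 := by
        apply pow_le_pow_left₀ hAnn hA
    _ = 4 / ((N:ℝ)^2 * B^2) := by
        field_simp
        ring
    _ ≤ 1 / (4 * d^2) := by
        rw [hBsq]
        rw [div_le_div_iff₀ (by positivity) (by positivity)]
        have : (2 * |d| / N)^2 = 4 * d^2 / N^2 := by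
          rw [div_pow]
          rw [mul_pow]
          rw [_root_.sq_abs]
          norm_num
        rw [this] at hsin
        have hN2 : (0:ℝ) < (N:ℝ)^2 := by positivity
        have h6 : 4 * d^2 ≤ Real.sin (a/2)^2 * (N:ℝ)^2 := (div_le_iff₀ hN2).mp hsin
        nlinarith

lemma parseval (N : ℕ) (hN : 0 < N) (lam t : ℝ) :
    ∑ x ∈ Finset.range N, (‖(N:ℂ)⁻¹ * ∑ z ∈ Finset.range N,
      Complex.exp (Complex.I * ((2 * (Real.pi:ℂ) * x - lam * t) * z / N))‖)^2 = 1 := by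
  have hNne : (N:ℂ) ≠ 0 := Nat.cast_ne_zero.mpr hN.ne'
  set e : ℕ → ℕ → ℂ := fun x z => Complex.exp (Complex.I * ((2 * (Real.pi:ℂ) * x - lam * t) * z / N)) with he
  set u : ℕ → ℂ := fun x => (N:ℂ)⁻¹ * ∑ z ∈ Finset.range N, e x z with hu
  have hre : ∀ x z : ℕ, Complex.I * ((2 * (Real.pi:ℂ) * x - lam * t) * z / N)
      = (((2*Real.pi*x - lam*t)*z/N : ℝ) : ℂ) * Complex.I := by
    intro x z; push_cast; ring
  have hconj : ∀ x z : ℕ, (starRingEnd ℂ) (e x z)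
      = Complex.exp (-((((2*Real.pi*x - lam*t)*z/N : ℝ):ℂ) * Complex.I)) := by
    intro x z
    rw [he]
    simp only
    rw [hre, ← Complex.exp_conj]
    congr 1
    simp [Complex.conj_ofReal, map_ofNat]
  have main : ∀ z ∈ Finset.range N, ∀ w ∈ Finset.range N,
      ∑ x ∈ Finset.range N, (e x z * (starRingEnd ℂ) (e x w)) = if z = w then (N:ℂ) else 0 := by
    intro z hz w hw
    rcases eq_or_ne z w with rfl | hzw
    · simp only [if_pos rfl]
      have h1 : ∀ x ∈ Finset.range N, e x z * (starRingEnd ℂ) (e x z) = 1 := by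
        intro x _
        rw [hconj, he]
        simp only
        rw [hre, ← Complex.exp_add]
        rw [show (((2*Real.pi*x - lam*t)*z/N : ℝ):ℂ) * Complex.I
            + -((((2*Real.pi*x - lam*t)*z/N : ℝ):ℂ) * Complex.I) = 0 by ring]
        exact Complex.exp_zero
      rw [Finset.sum_congr rfl h1]
      simp
    · rw [if_neg hzw]
      set m : ℤ := (z:ℤ) - (w:ℤ) with hm
      set c : ℂ := Complex.exp (((- (lam*t) * ((z:ℝ) - w)/N :ℝ):ℂ) * Complex.I) with hc
      have hterm : ∀ x ∈ Finset.range N, e x z * (starRingEnd ℂ) (e x w)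
          = Complex.exp (2 * (Real.pi:ℂ) * Complex.I * m * x / N) * c := by
        intro x _
        rw [hconj, he]
        simp only
        rw [hre, ← Complex.exp_add, hc, ← Complex.exp_add]
        congr 1
        rw [hm]
        push_cast
        field_simp
        ring
      rw [Finset.sum_congr rfl hterm, ← Finset.sum_mul]
      rw [exp_sum_zero N hN m (by omega) (by simp only [Finset.mem_range] at hz hw; omega)]
      simp
  -- assemble
  have expand : ∀ x : ℕ, u x * (starRingEnd ℂ) (u x)
      = (N:ℂ)⁻¹ * (N:ℂ)⁻¹ * ∑ z ∈ Finset.range N, ∑ w ∈ Finset.range N, e x z * (starRingEnd ℂ) (e x w) := by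
    intro x
    have h1 : (starRingEnd ℂ) (u x) = (N:ℂ)⁻¹ * ∑ w ∈ Finset.range N, (starRingEnd ℂ) (e x w) := by
      rw [hu]
      simp only
      rw [map_mul, map_sum, map_inv₀, Complex.conj_natCast]
    calc u x * (starRingEnd ℂ) (u x)
        = (N:ℂ)⁻¹ * (N:ℂ)⁻¹ * ((∑ z ∈ Finset.range N, e x z) * (∑ w ∈ Finset.range N, (starRingEnd ℂ) (e x w))) := by
          rw [h1, hu]
          ring
      _ = _ := by rw [Finset.sum_mul_sum]
  have hsumC : ∑ x ∈ Finset.range N, (u x * (starRingEnd ℂ) (u x)) = 1 := by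
    rw [Finset.sum_congr rfl (fun x _ => expand x), ← Finset.mul_sum]
    rw [Finset.sum_comm]
    have swap2 : ∀ z ∈ Finset.range N, ∑ x ∈ Finset.range N, ∑ w ∈ Finset.range N, e x z * (starRingEnd ℂ) (e x w)
        = ∑ w ∈ Finset.range N, ∑ x ∈ Finset.range N, e x z * (starRingEnd ℂ) (e x w) := by
      intro z _
      rw [Finset.sum_comm]
    rw [Finset.sum_congr rfl swap2]
    have : ∀ z ∈ Finset.range N, ∑ w ∈ Finset.range N, ∑ x ∈ Finset.range N, e x z * (starRingEnd ℂ) (e x w) = (N:ℂ) := by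
      intro z hz
      rw [Finset.sum_congr rfl (fun w hw => main z hz w hw)]
      rw [Finset.sum_ite_eq]
      simp [hz]
    rw [Finset.sum_congr rfl this]
    simp
    field_simp
  have habs : ∀ x : ℕ, ((‖u x‖)^2 : ℂ) = u x * (starRingEnd ℂ) (u x) := by
    intro x
    rw [Complex.mul_conj]
    norm_cast
    exact Complex.sq_norm _
  have : ((∑ x ∈ Finset.range N, (‖u x‖)^2 : ℝ) : ℂ) = 1 := by
    push_cast
    rw [Finset.sum_congr rfl (fun x _ => habs x)]
    exact hsumC
  have hfin : ∑ x ∈ Finset.range N, (‖u x‖)^2 = 1 := by exact_mod_cast this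
  exact hfin

end PhaseEstimationAux

open Real Complex in
open Classical in
/-- Phase-estimation tail bound (Brassard–Høyer–Mosca–Tapp): the probability that the measured
pointer value `x` lies within cyclic distance `k` of the rescaled phase `λt/(2π)` is at least
`1 − 1/(2(k−1))`, where `κ_x = 2^{−r} ∑_{z<2^r} e^{i(2πx − λt)z/2^r}`. -/
theorem stmt14 (lam t : ℝ) (ht : 0 < t) (r k : ℕ) (hk : 1 < k) (h2k : 2 * k ≤ 2 ^ r) :
    1 - 1 / (2 * ((k : ℝ) - 1)) ≤
      ∑ x ∈ (range (2 ^ r)).filter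
          (fun x => ∃ m : ℤ, |(x : ℝ) - lam * t / (2 * Real.pi) - m * 2 ^ r| ≤ k),
        (‖((2 : ℂ) ^ r)⁻¹ * ∑ z ∈ range (2 ^ r),
          Complex.exp (Complex.I * (((2 * Real.pi * x - lam * t) * z) / 2 ^ r))‖) ^ 2 := by
  have hπ := Real.pi_pos
  set N : ℕ := 2^r with hNdef
  have hN : 0 < N := Nat.pow_pos (by norm_num)
  have hNR : (0:ℝ) < (N:ℝ) := by exact_mod_cast hN
  have hk2 : 2 ≤ k := hk
  have hkR : (2:ℝ) ≤ (k:ℝ) := by exact_mod_cast hk2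
  have h2kR : 2*(k:ℝ) ≤ (N:ℝ) := by exact_mod_cast h2k
  have hNc : ((2:ℂ))^r = ((N:ℕ):ℂ) := by rw [hNdef]; push_cast; ring
  have hNr : ((2:ℝ))^r = ((N:ℕ):ℝ) := by rw [hNdef]; push_cast; ring
  simp only [hNc, hNr]
  set θ : ℝ := lam * t / (2 * Real.pi) with hθ
  have hset : ((do let a ← Finset.range N; pure ((a:ℝ))) : Finset ℝ)
      = (Finset.range N).image (fun a : ℕ => (a:ℝ)) := by
    rw [show ((do let a ← Finset.range N; pure ((a:ℝ))) : Finset ℝ)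
        = (Finset.range N).sup (fun a => {((a:ℝ))}) from rfl]
    rw [Finset.sup_eq_biUnion, Finset.biUnion_singleton]
  rw [hset, Finset.filter_image,
    Finset.sum_image (fun x _ y _ h => Nat.cast_injective h)]
  simp only [Complex.ofReal_natCast]
  -- definitions
  set n : ℕ → ℤ := fun x => round (((x:ℝ) - θ)/(N:ℝ)) with hn
  set d : ℕ → ℝ := fun x => (x:ℝ) - θ - (n x) * (N:ℝ) with hd
  have hd_abs : ∀ x : ℕ, |d x| ≤ (N:ℝ)/2 := by
    intro x
    have h := abs_sub_round (((x:ℝ) - θ)/(N:ℝ))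
    have he : d x = (((x:ℝ) - θ)/(N:ℝ) - (round (((x:ℝ) - θ)/(N:ℝ)) : ℤ)) * N := by
      simp only [hd, hn]
      field_simp
    rw [he, abs_mul, abs_of_pos hNR]
    nlinarith [abs_nonneg (((x:ℝ) - θ)/(N:ℝ) - (round (((x:ℝ) - θ)/(N:ℝ)) : ℤ))]
  set C := (Finset.range N).filter (fun x : ℕ => ¬ ∃ m : ℤ, |(x:ℝ) - θ - (m:ℝ) * (N:ℝ)| ≤ (k:ℝ)) with hC
  have hdk : ∀ x ∈ C, (k:ℝ) < |d x| := by
    intro x hx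
    obtain ⟨-, hnp⟩ := Finset.mem_filter.mp hx
    push_neg at hnp
    have h := hnp (n x)
    simp only [hd]
    exact h
  -- facts for the positive branch
  have hfacts : ∀ x ∈ C, ((x:ℤ) - N * n x : ℝ) = d x + θ := by
    intro x _
    simp only [hd]
    push_cast
    ring
  have hfl : ((⌊θ⌋:ℤ):ℝ) ≤ θ := Int.floor_le θ
  have hfl2 : θ < ((⌊θ⌋:ℤ):ℝ) + 1 := Int.lt_floor_add_one θ
  have hcl : θ ≤ ((⌈θ⌉:ℤ):ℝ) := Int.le_ceil θ
  have hcl2 : ((⌈θ⌉:ℤ):ℝ) < θ + 1 := Int.ceil_lt_add_one θ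
  -- injectivity helper
  have hinj_g : ∀ x ∈ C, ∀ y ∈ C, (x:ℤ) - N * n x = (y:ℤ) - N * n y → x = y := by
    intro x hx y hy hxy
    have hxN : x < N := Finset.mem_range.mp (Finset.mem_filter.mp hx).1
    have hyN : y < N := Finset.mem_range.mp (Finset.mem_filter.mp hy).1
    have hdvd : (N:ℤ) ∣ ((x:ℤ) - y) := ⟨n x - n y, by linarith [hxy]⟩
    have habs : |(x:ℤ) - y| < (N:ℤ) := by
      rw [abs_lt]
      omega
    have := Int.eq_zero_of_abs_lt_dvd hdvd habs
    omega
  -- positive branch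
  have hplus : ∑ x ∈ C.filter (fun x => 0 < d x), 1/(4 * (d x)^2) ≤ 1/(4*((k:ℝ)-1)) := by
    have hkey : ∀ x ∈ C.filter (fun x => 0 < d x),
        (⌊θ⌋ + k + 1 : ℤ) ≤ (x:ℤ) - N * n x ∧
        (((x:ℤ) - N * n x - ⌊θ⌋ - 1 : ℤ) : ℝ) ≤ |d x| := by
      intro x hx
      obtain ⟨hxC, hdx⟩ := Finset.mem_filter.mp hx
      have hkd : (k:ℝ) < |d x| := hdk x hxC
      have habs : |d x| = d x := abs_of_pos hdx
      have hgr := hfacts x hxC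
      constructor
      · have h1 : ((⌊θ⌋ + k : ℤ):ℝ) < (((x:ℤ) - N * n x : ℤ):ℝ) := by
          push_cast
          push_cast at hgr
          rw [habs] at hkd
          linarith
        have h2 : (⌊θ⌋ + k : ℤ) < (x:ℤ) - N * n x := by exact_mod_cast h1
        omega
      · push_cast
        push_cast at hgr
        rw [habs]
        linarith [hkd]
    apply tail_sum k N hk2 _ d (fun x => ((x:ℤ) - N * n x - ⌊θ⌋ - 1).toNat)
    · intro x hx y hy hxy
      obtain ⟨h1x, _⟩ := hkey x hx
      obtain ⟨h1y, _⟩ := hkey y hy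
      -- beta
      have : (x:ℤ) - N * n x = (y:ℤ) - N * n y := by omega
      exact hinj_g x (Finset.mem_filter.mp hx).1 y (Finset.mem_filter.mp hy).1 this
    · intro x hx
      obtain ⟨h1, h2⟩ := hkey x hx
      have hnn : (0:ℤ) ≤ (x:ℤ) - N * n x - ⌊θ⌋ - 1 := by omega
      have hcast : ((((x:ℤ) - N * n x - ⌊θ⌋ - 1).toNat : ℕ) : ℝ)
          = (((x:ℤ) - N * n x - ⌊θ⌋ - 1 : ℤ) : ℝ) := by
        have := Int.toNat_of_nonneg hnn
        exact_mod_cast congrArg (fun z : ℤ => (z:ℝ)) this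
      refine ⟨by omega, ?_, ?_⟩
      · have hle : ((((x:ℤ) - N * n x - ⌊θ⌋ - 1).toNat : ℕ) : ℝ) ≤ (N:ℝ) := by
          rw [hcast]
          have := hd_abs x
          linarith [h2]
        exact_mod_cast hle
      · rw [hcast]
        exact h2
  -- negative branch
  have hminus : ∑ x ∈ C.filter (fun x => ¬ 0 < d x), 1/(4 * (d x)^2) ≤ 1/(4*((k:ℝ)-1)) := by
    have hkey : ∀ x ∈ C.filter (fun x => ¬ 0 < d x),
        (k + 1 : ℤ) ≤ ⌈θ⌉ - ((x:ℤ) - N * n x) ∧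
        ((⌈θ⌉ - ((x:ℤ) - N * n x) - 1 : ℤ) : ℝ) ≤ |d x| := by
      intro x hx
      obtain ⟨hxC, hdx⟩ := Finset.mem_filter.mp hx
      push_neg at hdx
      have hkd : (k:ℝ) < |d x| := hdk x hxC
      have habs : |d x| = -(d x) := abs_of_nonpos hdx
      have hgr := hfacts x hxC
      constructor
      · have h1 : ((k:ℤ):ℝ) < ((⌈θ⌉ - ((x:ℤ) - N * n x) : ℤ):ℝ) := by
          push_cast
          push_cast at hgr
          rw [habs] at hkd
          linarith
        have h2 : (k:ℤ) < ⌈θ⌉ - ((x:ℤ) - N * n x) := by exact_mod_cast h1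
        omega
      · push_cast
        push_cast at hgr
        rw [habs]
        linarith [hkd]
    apply tail_sum k N hk2 _ d (fun x => (⌈θ⌉ - ((x:ℤ) - N * n x) - 1).toNat)
    · intro x hx y hy hxy
      obtain ⟨h1x, _⟩ := hkey x hx
      obtain ⟨h1y, _⟩ := hkey y hy
      -- beta
      have : (x:ℤ) - N * n x = (y:ℤ) - N * n y := by omega
      exact hinj_g x (Finset.mem_filter.mp hx).1 y (Finset.mem_filter.mp hy).1 this
    · intro x hx
      obtain ⟨h1, h2⟩ := hkey x hx
      have hnn : (0:ℤ) ≤ ⌈θ⌉ - ((x:ℤ) - N * n x) - 1 := by omega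
      have hcast : (((⌈θ⌉ - ((x:ℤ) - N * n x) - 1).toNat : ℕ) : ℝ)
          = ((⌈θ⌉ - ((x:ℤ) - N * n x) - 1 : ℤ) : ℝ) := by
        have := Int.toNat_of_nonneg hnn
        exact_mod_cast congrArg (fun z : ℤ => (z:ℝ)) this
      refine ⟨by omega, ?_, ?_⟩
      · have hle : (((⌈θ⌉ - ((x:ℤ) - N * n x) - 1).toNat : ℕ) : ℝ) ≤ (N:ℝ) := by
          rw [hcast]
          have := hd_abs x
          linarith [h2]
        exact_mod_cast hle
      · rw [hcast]
        exact h2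
  -- tail sum bound
  have htail : ∑ x ∈ C, 1/(4 * (d x)^2) ≤ 1/(2*((k:ℝ)-1)) := by
    rw [← Finset.sum_filter_add_sum_filter_not C (fun x => 0 < d x) (fun x => 1/(4 * (d x)^2))]
    have heq : (1:ℝ)/(4*((k:ℝ)-1)) + 1/(4*((k:ℝ)-1)) = 1/(2*((k:ℝ)-1)) := by
      have : ((k:ℝ)-1) ≠ 0 := by linarith
      field_simp
      ring
    linarith [hplus, hminus]
  -- pointwise bound on the tail
  have hpt : ∀ x ∈ C, (‖(N:ℂ)⁻¹ * ∑ z ∈ range N,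
      Complex.exp (Complex.I * (((2 * Real.pi * x - lam * t) * z) / (N:ℂ)))‖) ^ 2
      ≤ 1/(4 * (d x)^2) := by
    intro x hx
    have hkd : (k:ℝ) < |d x| := hdk x hx
    have hd0 : 0 < |d x| := by
      have : (0:ℝ) ≤ k := by positivity
      linarith
    have hxeq : (x:ℝ) - lam * t / (2*Real.pi) = d x + (n x) * N := by
      rw [← hθ]
      simp only [hd]
      ring
    exact kappa_bound N hN lam t x (d x) (n x) hxeq hd0 (hd_abs x)
  have htailF : ∑ x ∈ C, (‖(N:ℂ)⁻¹ * ∑ z ∈ range N,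
      Complex.exp (Complex.I * (((2 * Real.pi * x - lam * t) * z) / (N:ℂ)))‖) ^ 2
      ≤ 1/(2*((k:ℝ)-1)) :=
    le_trans (Finset.sum_le_sum hpt) htail
  -- total
  have htotal := parseval N hN lam t
  have hsplit := Finset.sum_filter_add_sum_filter_not (Finset.range N)
    (fun x : ℕ => ∃ m : ℤ, |(x:ℝ) - θ - (m:ℝ) * (N:ℝ)| ≤ (k:ℝ))
    (fun x : ℕ => (‖(N:ℂ)⁻¹ * ∑ z ∈ range N,
      Complex.exp (Complex.I * (((2 * Real.pi * x - lam * t) * z) / (N:ℂ)))‖) ^ 2)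
  rw [htotal] at hsplit
  rw [← hC] at hsplit
  linarith [hsplit, htailF]
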